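/- arXiv:1502.01488 — 2 statements merged into one kernel-verified Lean document; each statement's English description precedes it below -/
import Mathlib

section
/- If Z_{x,h} follows the binomial kernel distribution B(x+1, (x+h)/(x+1)), then Var(Z_{x,h}) = (x+h)(1−h)/(x+1), which tends to x/(x+1) (not 0) as h → 0; hence the binomial kernel does not satisfy the vanishing-covariance condition of associated kernels at targets x ≥ 1. -/
open Finset Polynomial

theorem binomial_variance_sum {R : Type*} [CommRing R] (n : ℕ) (p : R) :
    ∑ u ∈ range (n + 1), ((u : R) - n * p) ^ 2 * (n.choose u * p ^ u * (1 - p) ^ (n - u)) =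
      n * p * (1 - p) := by
  have h := congrArg (eval p) (bernsteinPolynomial.variance R n)
  simp only [eval_finsetSum, eval_mul, eval_pow, eval_sub, eval_X, eval_natCast,
    eval_one, bernsteinPolynomial, nsmul_eq_mul] at h
  rw [← h]
  refine sum_congr rfl fun u _ => ?_
  ring

/-- The binomial kernel distribution `B(x+1, (x+h)/(x+1))` has variance
`(x+h)(1−h)/(x+1)`, which tends to `x/(x+1)` (nonzero for `x ≥ 1`) as `h → 0`;
hence the binomial kernel does not satisfy the vanishing-variance condition. -/
theorem binomial_kernel_variance (x : ℕ) :
    (∀ h : ℝ, 0 < h → h ≤ 1 →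
      ∑ u ∈ Finset.range (x + 2), ((u : ℝ) - ((x : ℝ) + h)) ^ 2 *
        (((x + 1).choose u : ℝ) * (((x : ℝ) + h) / ((x : ℝ) + 1)) ^ u *
          ((1 - h) / ((x : ℝ) + 1)) ^ (x + 1 - u))
        = ((x : ℝ) + h) * (1 - h) / ((x : ℝ) + 1)) ∧
    Filter.Tendsto (fun h : ℝ => ((x : ℝ) + h) * (1 - h) / ((x : ℝ) + 1))
      (nhdsWithin 0 (Set.Ioi 0)) (nhds ((x : ℝ) / ((x : ℝ) + 1))) ∧
    (1 ≤ x → (x : ℝ) / ((x : ℝ) + 1) ≠ 0) := by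
  refine ⟨fun h _ _ => ?_, ?_, fun hx => by positivity⟩
  · have hmean : ((x + 1 : ℕ) : ℝ) * (((x : ℝ) + h) / ((x : ℝ) + 1)) = (x : ℝ) + h := by
      push_cast; field_simp
    have hq : (1 - h) / ((x : ℝ) + 1) = 1 - ((x : ℝ) + h) / ((x : ℝ) + 1) := by
      field_simp; ring
    have hvar := binomial_variance_sum (x + 1) (((x : ℝ) + h) / ((x : ℝ) + 1))
    rw [hmean, ← hq] at hvar
    rw [hvar]
    ring
  · have hcont : Continuous fun h : ℝ => ((x : ℝ) + h) * (1 - h) / ((x : ℝ) + 1) := by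
      fun_prop
    simpa using (hcont.tendsto 0).mono_left nhdsWithin_le_nhds
end

section
/- If Z_{x,h;a} has the discrete triangular kernel distribution, then Var(Z_{x,h;a}) = (1/P(a,h)) Σ_{u=-a}^{a} u^2((a+1)^h − |u|^h), and this variance tends to 0 as h → 0+ (for fixed a ≥ 1), so the discrete triangular kernel satisfies the associated kernel conditions. -/
/-- Normalizing constant of the discrete triangular kernel. -/
noncomputable def dtNorm (a : ℕ) (h : ℝ) : ℝ :=
  (2 * (a : ℝ) + 1) * ((a : ℝ) + 1) ^ h - 2 * ∑ k ∈ Finset.Icc 1 a, (k : ℝ) ^ h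

/-- The discrete triangular kernel at target `x` with arm `a` and bandwidth `h`. -/
noncomputable def dtKernel (a : ℕ) (x : ℤ) (h : ℝ) (u : ℤ) : ℝ :=
  if u ∈ Finset.Icc (x - (a : ℤ)) (x + (a : ℤ)) then
    (((a : ℝ) + 1) ^ h - |(u : ℝ) - (x : ℝ)| ^ h) / dtNorm a h
  else 0

/-! The kernel only depends on `u - x`, so recentring turns its variance into the stated sum.
As `h → 0`, `c ^ h → 1` for every `c ≠ 0`: hence `P(a,h) → (2a+1) - 2a = 1`, and each summand
`u² ((a+1)^h - |u|^h)` tends to `0` (for `u = 0` it vanishes identically). -/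

open Filter Topology Finset

lemma tendsto_const_rpow_nhds_zero {c : ℝ} (hc : c ≠ 0) :
    Tendsto (fun h : ℝ => c ^ h) (𝓝 0) (𝓝 1) := by
  simpa using (Real.continuousAt_const_rpow (b := 0) hc).tendsto

lemma tendsto_dtNorm_nhds_zero (a : ℕ) : Tendsto (dtNorm a) (𝓝 0) (𝓝 1) := by
  have hsum : Tendsto (fun h : ℝ => ∑ k ∈ Icc 1 a, (k : ℝ) ^ h) (𝓝 0) (𝓝 a) := by
    simpa using tendsto_finsetSum (Icc 1 a) fun k hk =>
      tendsto_const_rpow_nhds_zero (c := k) (by have := (mem_Icc.mp hk).1; positivity)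
  have hpow := tendsto_const_rpow_nhds_zero (c := (a : ℝ) + 1) (by positivity)
  have hlim : (2 * (a : ℝ) + 1) * 1 - 2 * a = 1 := by ring
  rw [← hlim]
  exact (hpow.const_mul (2 * (a : ℝ) + 1)).sub (hsum.const_mul 2)

lemma sum_Icc_sub_center {M : Type*} [AddCommMonoid M] (f : ℤ → M) (x c : ℤ) :
    ∑ u ∈ Icc (x - c) (x + c), f (u - x) = ∑ v ∈ Icc (-c) c, f v := by
  refine sum_nbij' (· - x) (· + x) ?_ ?_ (fun u _ => sub_add_cancel u x)
    (fun u _ => add_sub_cancel_right u x) fun _ _ => rfl <;>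
  · intro u hu
    rw [mem_Icc] at hu ⊢
    omega

lemma sum_sq_mul_dtKernel (a : ℕ) (x : ℤ) (h : ℝ) :
    ∑ u ∈ Icc (x - (a : ℤ)) (x + (a : ℤ)), ((u : ℝ) - (x : ℝ)) ^ 2 * dtKernel a x h u
      = (1 / dtNorm a h) *
          ∑ u ∈ Icc (-(a : ℤ)) (a : ℤ), (u : ℝ) ^ 2 * (((a : ℝ) + 1) ^ h - |(u : ℝ)| ^ h) := by
  rw [mul_sum, ← sum_Icc_sub_center _ x]
  refine sum_congr rfl fun u hu => ?_
  rw [dtKernel, if_pos hu]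
  push_cast
  ring

lemma tendsto_dtVariance_nhds_zero (a : ℕ) :
    Tendsto (fun h : ℝ => (1 / dtNorm a h) *
        ∑ u ∈ Icc (-(a : ℤ)) (a : ℤ), (u : ℝ) ^ 2 * (((a : ℝ) + 1) ^ h - |(u : ℝ)| ^ h))
      (𝓝 0) (𝓝 0) := by
  have hterm (u : ℤ) :
      Tendsto (fun h : ℝ => (u : ℝ) ^ 2 * (((a : ℝ) + 1) ^ h - |(u : ℝ)| ^ h)) (𝓝 0) (𝓝 0) := by
    rcases eq_or_ne u 0 with rfl | hu
    · simp
    · have hpow := tendsto_const_rpow_nhds_zero (c := (a : ℝ) + 1) (by positivity)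
      have habs := tendsto_const_rpow_nhds_zero (c := |(u : ℝ)|) (by simpa using hu)
      simpa using (hpow.sub habs).const_mul ((u : ℝ) ^ 2)
  have hsum := tendsto_finsetSum (Icc (-(a : ℤ)) a) fun u _ => hterm u
  simpa using ((tendsto_dtNorm_nhds_zero a).inv₀ one_ne_zero).mul hsum

theorem discrete_triangular_variance_general (a : ℕ) (x : ℤ) :
    (∀ h : ℝ, 0 < h →
      ∑ u ∈ Finset.Icc (x - (a : ℤ)) (x + (a : ℤ)),
          ((u : ℝ) - (x : ℝ)) ^ 2 * dtKernel a x h u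
        = (1 / dtNorm a h) *
            ∑ u ∈ Finset.Icc (-(a : ℤ)) (a : ℤ), (u : ℝ) ^ 2 * (((a : ℝ) + 1) ^ h - |(u : ℝ)| ^ h)) ∧
    Filter.Tendsto
      (fun h : ℝ => (1 / dtNorm a h) *
        ∑ u ∈ Finset.Icc (-(a : ℤ)) (a : ℤ), (u : ℝ) ^ 2 * (((a : ℝ) + 1) ^ h - |(u : ℝ)| ^ h))
      (nhdsWithin 0 (Set.Ioi 0)) (nhds 0) :=
  ⟨fun h _ => sum_sq_mul_dtKernel a x h,
    (tendsto_dtVariance_nhds_zero a).mono_left nhdsWithin_le_nhds⟩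

/-- The variance of the discrete triangular kernel equals
`(1/P(a,h)) Σ_{u=-a}^{a} u² ((a+1)^h − |u|^h)` and tends to `0` as `h → 0⁺`,
so the discrete triangular kernel satisfies the associated kernel conditions. -/
theorem discrete_triangular_variance (a : ℕ) (x : ℤ) (ha : 1 ≤ a) :
    (∀ h : ℝ, 0 < h →
      ∑ u ∈ Finset.Icc (x - (a : ℤ)) (x + (a : ℤ)),
          ((u : ℝ) - (x : ℝ)) ^ 2 * dtKernel a x h u
        = (1 / dtNorm a h) *
            ∑ u ∈ Finset.Icc (-(a : ℤ)) (a : ℤ), (u : ℝ) ^ 2 * (((a : ℝ) + 1) ^ h - |(u : ℝ)| ^ h)) ∧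
    Filter.Tendsto
      (fun h : ℝ => (1 / dtNorm a h) *
        ∑ u ∈ Finset.Icc (-(a : ℤ)) (a : ℤ), (u : ℝ) ^ 2 * (((a : ℝ) + 1) ^ h - |(u : ℝ)| ^ h))
      (nhdsWithin 0 (Set.Ioi 0)) (nhds 0) :=
  discrete_triangular_variance_general a x
end
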